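/- arXiv:2309.13031 — 5 statements merged into one kernel-verified Lean document; each statement's English description precedes it below -/
import Mathlib

section
/- For q, r, v, σ > 0 and q - c > 0, the density p_s(x) = k₀ exp(-2r x^v/(v σ²)) x^(2(q-c)/σ²) solves the stationary Fokker-Planck equation d/dx[(q x - r x^(v+1) - c x + σ² x) p_s(x)] = (σ²/2) d²/dx²[x² p_s(x)] for all x > 0. -/
/-!
The density has vanishing probability current: `(σ² / 2) (x² p_s)' = f p_s` on `(0, ∞)`, where
`f` is the drift. Differentiating this first-order identity once more gives the stationary
Fokker–Planck equation.
-/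

open Filter Topology

theorem Real.hasDerivAt_exp_neg_mul_rpow_mul_rpow (a v B : ℝ) {z : ℝ} (hz : 0 < z) :
    HasDerivAt (fun y : ℝ => Real.exp (-(a * y ^ v)) * y ^ B)
      (Real.exp (-(a * z ^ v)) * z ^ B * (B / z - a * v * z ^ (v - 1))) z := by
  have hexp : HasDerivAt (fun y : ℝ => Real.exp (-(a * y ^ v)))
      (Real.exp (-(a * z ^ v)) * -(a * (v * z ^ (v - 1)))) z :=
    ((Real.hasDerivAt_rpow_const (Or.inl hz.ne')).const_mul a).fun_neg.exp
  refine (hexp.mul (Real.hasDerivAt_rpow_const (p := B) (Or.inl hz.ne'))).congr_deriv ?_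
  rw [Real.rpow_sub_one hz.ne' B]
  field_simp
  ring

namespace HanggiKlimontovich

noncomputable def drift (q r v c σ y : ℝ) : ℝ :=
  q * y - r * y ^ (v + 1) - c * y + σ ^ 2 * y

noncomputable def density (q r v c σ k₀ y : ℝ) : ℝ :=
  k₀ * Real.exp (-(2 * r * y ^ v) / (v * σ ^ 2)) * y ^ (2 * (q - c) / σ ^ 2)

theorem hasDerivAt_density (q r v c σ k₀ : ℝ) (hv : v ≠ 0) (hσ : σ ≠ 0) {z : ℝ} (hz : 0 < z) :
    HasDerivAt (density q r v c σ k₀)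
      (density q r v c σ k₀ z * (2 * (q - c) / σ ^ 2 / z - 2 * r / σ ^ 2 * z ^ (v - 1))) z := by
  have hfun : density q r v c σ k₀ = fun y =>
      k₀ * (Real.exp (-(2 * r / (v * σ ^ 2) * y ^ v)) * y ^ (2 * (q - c) / σ ^ 2)) := by
    funext y
    rw [density, neg_div, div_mul_eq_mul_div, mul_assoc]
  rw [hfun]
  refine ((Real.hasDerivAt_exp_neg_mul_rpow_mul_rpow (2 * r / (v * σ ^ 2)) v
    (2 * (q - c) / σ ^ 2) hz).const_mul k₀).congr_deriv ?_
  field_simp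

theorem half_sq_mul_deriv_sq_mul_density_eq_drift_mul_density (q r v c σ k₀ : ℝ)
    (hv : v ≠ 0) (hσ : σ ≠ 0) {z : ℝ} (hz : 0 < z) :
    σ ^ 2 / 2 * deriv (fun y => y ^ 2 * density q r v c σ k₀ y) z
      = drift q r v c σ z * density q r v c σ k₀ z := by
  have h : HasDerivAt (fun y => y ^ 2 * density q r v c σ k₀ y) _ z :=
    (hasDerivAt_pow 2 z).mul (hasDerivAt_density q r v c σ k₀ hv hσ hz)
  rw [h.deriv]
  have hpow : z ^ (v + 1) = z ^ (v - 1) * z ^ 2 := by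
    rw [← Real.rpow_natCast z 2, ← Real.rpow_add hz]
    ring_nf
  simp only [drift, hpow]
  field_simp
  ring

end HanggiKlimontovich

open HanggiKlimontovich in
theorem stationary_fokker_planck_general (q r v c σ k₀ : ℝ)
    (hv : 0 < v) (hσ : 0 < σ) :
    ∀ x : ℝ, 0 < x →
      deriv (fun y : ℝ => (q * y - r * y ^ (v + 1) - c * y + σ ^ 2 * y) *
        (k₀ * Real.exp (-(2 * r * y ^ v) / (v * σ ^ 2)) * y ^ (2 * (q - c) / σ ^ 2))) x
      = (σ ^ 2 / 2) *
        deriv (deriv (fun y : ℝ => y ^ 2 *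
          (k₀ * Real.exp (-(2 * r * y ^ v) / (v * σ ^ 2)) * y ^ (2 * (q - c) / σ ^ 2)))) x := by
  intro x hx
  have hflux : (fun y => drift q r v c σ y * density q r v c σ k₀ y)
      =ᶠ[𝓝 x] fun y => σ ^ 2 / 2 * deriv (fun y => y ^ 2 * density q r v c σ k₀ y) y := by
    filter_upwards [Ioi_mem_nhds hx] with z hz
    exact (half_sq_mul_deriv_sq_mul_density_eq_drift_mul_density q r v c σ k₀ hv.ne' hσ.ne' hz).symm
  exact hflux.deriv_eq.trans (deriv_const_mul_field _)

theorem stationary_fokker_planck (q r v c σ k₀ : ℝ)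
    (hq : 0 < q) (hr : 0 < r) (hv : 0 < v) (hσ : 0 < σ) (hqc : 0 < q - c) (hk₀ : 0 < k₀) :
    ∀ x : ℝ, 0 < x →
      deriv (fun y : ℝ => (q * y - r * y ^ (v + 1) - c * y + σ ^ 2 * y) *
        (k₀ * Real.exp (-(2 * r * y ^ v) / (v * σ ^ 2)) * y ^ (2 * (q - c) / σ ^ 2))) x
      = (σ ^ 2 / 2) *
        deriv (deriv (fun y : ℝ => y ^ 2 *
          (k₀ * Real.exp (-(2 * r * y ^ v) / (v * σ ^ 2)) * y ^ (2 * (q - c) / σ ^ 2)))) x :=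
  stationary_fokker_planck_general q r v c σ k₀ hv hσ
end

section
/- For q, r, v, σ > 0 and q - c > 0, the stationary probability flow J(x) = (q x - r x^(v+1) - c x + σ² x) p_s(x) - (σ²/2) d/dx[x² p_s(x)] vanishes identically on (0, ∞) when p_s(x) = k₀ exp(-2r x^v/(v σ²)) x^(2(q-c)/σ²). -/
/-!
With `κ = -2r/(vσ²)` and `a = 2(q-c)/σ²`, the function `x² p_s(x) = k₀ x² exp(κ xᵛ) xᵃ` has
logarithmic derivative `(2 + a + κ v xᵛ)/x`, which is exactly `2 · drift / (σ² x²)`; hence the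
diffusion term of the flow cancels the drift term.
-/

open Real Set

theorem hasDerivAt_exp_mul_rpow_mul_rpow {κ v s x : ℝ} (hx : 0 < x) :
    HasDerivAt (fun y => exp (κ * y ^ v) * y ^ s)
      ((κ * v * x ^ v + s) / x * (exp (κ * x ^ v) * x ^ s)) x := by
  have hexp : HasDerivAt (fun y => exp (κ * y ^ v)) (exp (κ * x ^ v) * (κ * (v * x ^ (v - 1)))) x :=
    ((hasDerivAt_rpow_const (Or.inl hx.ne')).const_mul κ).exp
  refine (hexp.mul (hasDerivAt_rpow_const (p := s) (Or.inl hx.ne'))).congr_deriv ?_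
  rw [rpow_sub hx, rpow_sub hx, rpow_one]
  field_simp

theorem stationary_flow_vanishes_general (q r v c σ k₀ : ℝ)
    (hv : 0 < v) (hσ : 0 < σ) :
    ∀ x : ℝ, 0 < x →
      (q * x - r * x ^ (v + 1) - c * x + σ ^ 2 * x) *
        (k₀ * Real.exp (-(2 * r * x ^ v) / (v * σ ^ 2)) * x ^ (2 * (q - c) / σ ^ 2)) -
      (σ ^ 2 / 2) *
        deriv (fun y : ℝ => y ^ 2 *
          (k₀ * Real.exp (-(2 * r * y ^ v) / (v * σ ^ 2)) * y ^ (2 * (q - c) / σ ^ 2))) x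
      = 0 := by
  intro x hx
  set a := 2 * (q - c) / σ ^ 2 with ha
  set κ := -(2 * r) / (v * σ ^ 2) with hκ
  have hexponent (y : ℝ) : -(2 * r * y ^ v) / (v * σ ^ 2) = κ * y ^ v := by
    rw [hκ]
    ring
  have hfun : (fun y : ℝ => y ^ 2 * (k₀ * exp (-(2 * r * y ^ v) / (v * σ ^ 2)) * y ^ a)) =
      fun y => k₀ * (y ^ 2 * (exp (κ * y ^ v) * y ^ a)) := by
    funext y
    rw [hexponent]
    ring
  have hderiv : HasDerivAt (fun y => k₀ * (y ^ 2 * (exp (κ * y ^ v) * y ^ a))) _ x :=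
    ((hasDerivAt_pow 2 x).mul (hasDerivAt_exp_mul_rpow_mul_rpow hx)).const_mul k₀
  rw [hfun, hderiv.deriv, hexponent, rpow_add_one hx.ne', ha, hκ]
  field_simp
  ring

theorem stationary_flow_vanishes (q r v c σ k₀ : ℝ)
    (hq : 0 < q) (hr : 0 < r) (hv : 0 < v) (hσ : 0 < σ) (hqc : 0 < q - c) (hk₀ : 0 < k₀) :
    ∀ x : ℝ, 0 < x →
      (q * x - r * x ^ (v + 1) - c * x + σ ^ 2 * x) *
        (k₀ * Real.exp (-(2 * r * x ^ v) / (v * σ ^ 2)) * x ^ (2 * (q - c) / σ ^ 2)) -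
      (σ ^ 2 / 2) *
        deriv (fun y : ℝ => y ^ 2 *
          (k₀ * Real.exp (-(2 * r * y ^ v) / (v * σ ^ 2)) * y ^ (2 * (q - c) / σ ^ 2))) x
      = 0 :=
  stationary_flow_vanishes_general q r v c σ k₀ hv hσ
end

section
/- The upper incomplete gamma function satisfies Γ(s, x) / (x^(s-1) e^(-x)) → 1 as x → ∞, for any fixed real s. -/
open Real Set Filter MeasureTheory Topology

/-! Both `Γ(s, x)` and `x ^ (s - 1) * exp (-x)` tend to `0`, with derivatives
`-x ^ (s - 1) * exp (-x)` and `((s - 1) / x - 1) * x ^ (s - 1) * exp (-x)`. The ratio of the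
derivatives is `1 / (1 - (s - 1) / x) → 1`, so L'Hôpital's rule gives the limit. -/

theorem hasDerivAt_integral_Ioi {E : Type*} [NormedAddCommGroup E] [NormedSpace ℝ E]
    [CompleteSpace E] {f : ℝ → E} {a x : ℝ} (hf : IntegrableOn f (Ioi a)) (hax : a < x)
    (hfx : ContinuousAt f x) : HasDerivAt (fun y => ∫ t in Ioi y, f t) (-f x) x := by
  have hprim : HasDerivAt (fun y => ∫ t in a..y, f t) (f x) x :=
    intervalIntegral.integral_hasDerivAt_right
      ((intervalIntegrable_iff_integrableOn_Ioc_of_le hax.le).2 (hf.mono_set Ioc_subset_Ioi_self))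
      ⟨Ioi a, Ioi_mem_nhds hax, hf.aestronglyMeasurable⟩ hfx
  refine (hprim.const_sub (∫ t in Ioi a, f t)).congr_of_eventuallyEq ?_
  filter_upwards [Ioi_mem_nhds hax] with y hy
  rw [← intervalIntegral.integral_Ioi_sub_Ioi hf (le_of_lt hy), sub_sub_cancel]

theorem continuousAt_rpow_mul_exp_neg (p : ℝ) {x : ℝ} (hx : x ≠ 0) :
    ContinuousAt (fun t => t ^ p * exp (-t)) x :=
  (continuousAt_rpow_const _ _ (.inl hx)).mul (by fun_prop)

theorem integrableOn_rpow_mul_exp_neg_Ioi (p : ℝ) {a : ℝ} (ha : 0 < a) :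
    IntegrableOn (fun t => t ^ p * exp (-t)) (Ioi a) := by
  refine integrable_of_isBigO_exp_neg one_half_pos ?_ ?_
  · exact fun t ht => (continuousAt_rpow_mul_exp_neg p (ha.trans_le ht).ne').continuousWithinAt
  · simpa [mul_comm] using
      (isLittleO_exp_mul_rpow_of_lt p (by norm_num : (-1 : ℝ) < -(1 / 2))).isBigO

theorem hasDerivAt_rpow_mul_exp_neg (p : ℝ) {x : ℝ} (hx : 0 < x) :
    HasDerivAt (fun y => y ^ p * exp (-y)) ((p / x - 1) * (x ^ p * exp (-x))) x := by
  refine ((hasDerivAt_rpow_const (.inl hx.ne')).mul (hasDerivAt_neg x).exp).congr_deriv ?_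
  rw [rpow_sub_one hx.ne']
  field_simp
  ring

theorem incomplete_gamma_asymptotic (s : ℝ) :
    Tendsto
      (fun x : ℝ =>
        (∫ t in Ioi x, t ^ (s - 1) * Real.exp (-t)) / (x ^ (s - 1) * Real.exp (-x)))
      atTop (nhds 1) := by
  have hg_pos : ∀ᶠ x : ℝ in atTop, 0 < x ^ (s - 1) * exp (-x) := by
    filter_upwards [eventually_gt_atTop 0] with x hx
    positivity
  have hratio : Tendsto (fun x : ℝ => (s - 1) / x) atTop (𝓝 0) :=
    tendsto_const_nhds.div_atTop tendsto_id
  have hfactor : ∀ᶠ x : ℝ in atTop, (s - 1) / x - 1 ≠ 0 := by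
    filter_upwards [hratio.eventually (gt_mem_nhds one_pos)] with x hx
    linarith
  refine HasDerivAt.lhopital_zero_atTop (f' := fun x => -(x ^ (s - 1) * exp (-x)))
    (g' := fun x => ((s - 1) / x - 1) * (x ^ (s - 1) * exp (-x))) ?_ ?_ ?_
    (tendsto_integral_Ioi_zero tendsto_id) ?_ ?_
  · filter_upwards [eventually_gt_atTop 0] with x hx
    exact hasDerivAt_integral_Ioi (integrableOn_rpow_mul_exp_neg_Ioi _ (half_pos hx))
      (half_lt_self hx) (continuousAt_rpow_mul_exp_neg _ hx.ne')
  · filter_upwards [eventually_gt_atTop 0] with x hx using hasDerivAt_rpow_mul_exp_neg _ hx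
  · filter_upwards [hg_pos, hfactor] with x hgx hx using mul_ne_zero hx hgx.ne'
  · simpa using tendsto_rpow_mul_exp_neg_mul_atTop_nhds_zero (s - 1) 1 one_pos
  · have hlim : Tendsto (fun x : ℝ => -((s - 1) / x - 1)⁻¹) atTop (𝓝 1) := by
      simpa using ((hratio.sub_const 1).inv₀ (by norm_num)).neg
    refine hlim.congr' ?_
    filter_upwards [hg_pos] with x hgx
    rw [neg_div, div_mul_cancel_right₀ hgx.ne']
end

section
/- For q, r, v, σ > 0 and q - c > 0, the Feller quantity N(0) = ∫₀¹ [∫_η¹ S'(ξ) dξ] m(η) dη is infinite, where S' and m are the scale and speed densities of the diffusion with drift b(z) = (q - r z^v - c + σ²) z and diffusion coefficient a(z) = σ² z². In particular N(0) ≥ ∫₀¹ (η^(-1) - 1) dη = ∞. -/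
/-!
Since `r z ^ v ≥ 0`, the integrand `f z = (q - r z ^ v - c + σ²) / (σ² z)` is bounded by `A / z`
with `A = (q - c + σ²) / σ² ≥ 1`. Hence `S' ξ * m η ≥ (σ η)⁻² (η / ξ) ^ (2A)` for `η ≤ ξ`, and
integrating over `ξ ∈ [η, 1]` gives `(∫_η^1 S') * m η ≥ σ⁻² (η⁻¹ - 1) / (2A - 1)`, which is not
integrable at `0`.
-/

open Real Set MeasureTheory

theorem inv_sub_one_div_le_rpow_mul_integral_rpow_neg {p η : ℝ} (hp : 2 ≤ p) (hη : 0 < η)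
    (hη1 : η ≤ 1) : (η⁻¹ - 1) / (p - 1) ≤ η ^ (p - 2) * ∫ ξ in η..1, ξ ^ (-p) := by
  have hint : ∫ ξ in η..1, ξ ^ (-p) = (η ^ (1 - p) - 1) / (p - 1) := by
    rw [integral_rpow (Or.inr ⟨by linarith, fun h => (lt_min hη one_pos).not_ge h.1⟩), one_rpow,
      show -p + 1 = 1 - p by ring, ← neg_sub p 1, div_neg, ← neg_div, neg_sub]
  have hinv : η ^ (p - 2) * η ^ (1 - p) = η⁻¹ := by
    rw [← rpow_add hη, show p - 2 + (1 - p) = -1 by ring, rpow_neg_one]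
  have hle : η ^ (p - 2) ≤ 1 := rpow_le_one hη.le hη1 (by linarith)
  rw [hint, mul_div_assoc', mul_sub, hinv, mul_one]
  gcongr
  linarith

theorem lintegral_Ioo_ofReal_inv_sub_one_eq_top :
    ∫⁻ η in Ioo (0:ℝ) 1, ENNReal.ofReal (η⁻¹ - 1) = ⊤ := by
  by_contra h
  have hnonneg : 0 ≤ᵐ[volume.restrict (Ioo (0:ℝ) 1)] fun η => η⁻¹ - 1 := by
    filter_upwards [ae_restrict_mem measurableSet_Ioo] with η hη
    simpa using (one_le_inv₀ hη.1).2 hη.2.le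
  have hint : IntegrableOn (fun η : ℝ => η⁻¹ - 1) (Ioo 0 1) :=
    (lintegral_ofReal_ne_top_iff_integrable (by fun_prop) hnonneg).1 h
  have hinv : IntegrableOn (fun η : ℝ => η⁻¹) (Ioo 0 1) := by
    simpa [Pi.add_def] using hint.add (integrableOn_const (C := (1:ℝ)) measure_Ioo_lt_top.ne)
  have := intervalIntegrable_inv_iff.1 ((intervalIntegrable_iff_integrableOn_Ioo_of_le zero_le_one
    (by simp) (by simp)).2 hinv)
  simp at this

section ScaleSpeed

variable {f : ℝ → ℝ} {A σ : ℝ}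

theorem ContinuousOn.intervalIntegrable_of_Ioi (hf : ContinuousOn f (Ioi 0)) {a b : ℝ}
    (ha : 0 < a) (hb : 0 < b) : IntervalIntegrable f volume a b :=
  (hf.mono fun _ hz => (lt_min ha hb).trans_le hz.1).intervalIntegrable

theorem ContinuousOn.continuousOn_Ioi_primitive (hf : ContinuousOn f (Ioi 0)) {a : ℝ}
    (ha : 0 < a) : ContinuousOn (fun x => ∫ z in a..x, f z) (Ioi 0) := fun x hx =>
  (intervalIntegral.integral_hasDerivAt_right (hf.intervalIntegrable_of_Ioi ha hx)
    (hf.stronglyMeasurableAtFilter isOpen_Ioi x hx)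
    (hf.continuousAt (Ioi_mem_nhds hx))).continuousAt.continuousWithinAt

theorem integral_le_mul_log_div (hf : ContinuousOn f (Ioi 0))
    (hfA : ∀ z, 0 < z → f z ≤ A / z) {a b : ℝ} (ha : 0 < a) (hab : a ≤ b) :
    ∫ z in a..b, f z ≤ A * log (b / a) := by
  have hb : 0 < b := ha.trans_le hab
  have hinv : IntervalIntegrable (fun z : ℝ => A * z⁻¹) volume a b :=
    ((continuousOn_inv₀.mono fun _ hz => ((lt_min ha hb).trans_le hz.1).ne').intervalIntegrable
      ).const_mul A
  calc ∫ z in a..b, f z ≤ ∫ z in a..b, A * z⁻¹ :=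
        intervalIntegral.integral_mono_on hab (hf.intervalIntegrable_of_Ioi ha hb) hinv
          fun z hz => hfA z (ha.trans_le hz.1)
    _ = A * log (b / a) := by rw [intervalIntegral.integral_const_mul, integral_inv_of_pos ha hb]

theorem rpow_mul_rpow_neg_le_exp_neg_two_mul_integral (hf : ContinuousOn f (Ioi 0))
    (hfA : ∀ z, 0 < z → f z ≤ A / z) {a b : ℝ} (ha : 0 < a) (hab : a ≤ b) :
    a ^ (2 * A) * b ^ (-(2 * A)) ≤ exp (-(2 * ∫ z in a..b, f z)) := by
  have hb : 0 < b := ha.trans_le hab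
  have hpow : a ^ (2 * A) * b ^ (-(2 * A)) = exp (-(2 * (A * log (b / a)))) := by
    rw [rpow_def_of_pos ha, rpow_def_of_pos hb, ← exp_add, log_div hb.ne' ha.ne']
    ring_nf
  rw [hpow, exp_le_exp]
  linarith [integral_le_mul_log_div hf hfA ha hab]

noncomputable def scaleDensity (f : ℝ → ℝ) (ξ : ℝ) : ℝ :=
  exp (-(2 * ∫ z in (1:ℝ)..ξ, f z))

noncomputable def speedDensity (f : ℝ → ℝ) (σ η : ℝ) : ℝ :=
  (σ * η) ^ (-2 : ℝ) * exp (2 * ∫ z in (1:ℝ)..η, f z)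

theorem intervalIntegrable_scaleDensity (hf : ContinuousOn f (Ioi 0)) {a b : ℝ}
    (ha : 0 < a) (hb : 0 < b) : IntervalIntegrable (scaleDensity f) volume a b := by
  refine ContinuousOn.intervalIntegrable ?_
  have hsub : uIcc a b ⊆ Ioi 0 := fun _ hz => (lt_min ha hb).trans_le hz.1
  exact (((hf.continuousOn_Ioi_primitive one_pos).mono hsub).const_smul (-2 : ℝ)).rexp.congr
    fun ξ _ => by simp [scaleDensity]

theorem scaleDensity_mul_speedDensity (hf : ContinuousOn f (Ioi 0)) {ξ η : ℝ}
    (hξ : 0 < ξ) (hη : 0 < η) :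
    scaleDensity f ξ * speedDensity f σ η = (σ * η) ^ (-2 : ℝ) * exp (-(2 * ∫ z in η..ξ, f z)) := by
  rw [scaleDensity, speedDensity, ← intervalIntegral.integral_interval_sub_left
    (hf.intervalIntegrable_of_Ioi one_pos hξ) (hf.intervalIntegrable_of_Ioi one_pos hη),
    mul_left_comm, ← exp_add]
  ring_nf

theorem le_scaleDensity_mul_speedDensity (hσ : 0 ≤ σ) (hf : ContinuousOn f (Ioi 0))
    (hfA : ∀ z, 0 < z → f z ≤ A / z) {ξ η : ℝ} (hη : 0 < η) (hηξ : η ≤ ξ) :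
    (σ * η) ^ (-2 : ℝ) * η ^ (2 * A) * ξ ^ (-(2 * A)) ≤ scaleDensity f ξ * speedDensity f σ η := by
  rw [scaleDensity_mul_speedDensity hf (hη.trans_le hηξ) hη, mul_assoc]
  exact mul_le_mul_of_nonneg_left (rpow_mul_rpow_neg_le_exp_neg_two_mul_integral hf hfA hη hηξ)
    (by positivity)

theorem le_integral_scaleDensity_mul_speedDensity (hσ : 0 < σ) (hf : ContinuousOn f (Ioi 0))
    (hfA : ∀ z, 0 < z → f z ≤ A / z) (hA : 1 ≤ A) {η : ℝ} (hη : 0 < η) (hη1 : η ≤ 1) :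
    (σ ^ 2)⁻¹ / (2 * A - 1) * (η⁻¹ - 1) ≤
      (∫ ξ in η..1, scaleDensity f ξ) * speedDensity f σ η := by
  have hconst : (σ * η) ^ (-2 : ℝ) * η ^ (2 * A) = (σ ^ 2)⁻¹ * η ^ (2 * A - 2) := by
    rw [mul_rpow hσ.le hη.le, rpow_neg hσ.le, rpow_two, mul_assoc, ← rpow_add hη]
    ring_nf
  have hpow : IntervalIntegrable (fun ξ : ℝ => ξ ^ (-(2 * A))) volume η 1 :=
    intervalIntegral.intervalIntegrable_rpow (Or.inr fun h => (lt_min hη one_pos).not_ge h.1)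
  calc (σ ^ 2)⁻¹ / (2 * A - 1) * (η⁻¹ - 1)
      = (σ ^ 2)⁻¹ * ((η⁻¹ - 1) / (2 * A - 1)) := by ring
    _ ≤ (σ ^ 2)⁻¹ * (η ^ (2 * A - 2) * ∫ ξ in η..1, ξ ^ (-(2 * A))) := by
      gcongr
      exact inv_sub_one_div_le_rpow_mul_integral_rpow_neg (by linarith) hη hη1
    _ = ∫ ξ in η..1, (σ * η) ^ (-2 : ℝ) * η ^ (2 * A) * ξ ^ (-(2 * A)) := by
      rw [intervalIntegral.integral_const_mul, hconst, mul_assoc]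
    _ ≤ ∫ ξ in η..1, scaleDensity f ξ * speedDensity f σ η :=
      intervalIntegral.integral_mono_on hη1 (hpow.const_mul _)
        ((intervalIntegrable_scaleDensity hf hη one_pos).mul_const _)
        fun ξ hξ => le_scaleDensity_mul_speedDensity hσ.le hf hfA hη hξ.1
    _ = (∫ ξ in η..1, scaleDensity f ξ) * speedDensity f σ η :=
      intervalIntegral.integral_mul_const _ _

theorem lintegral_Ioo_integral_scaleDensity_mul_speedDensity_eq_top (hσ : 0 < σ)
    (hf : ContinuousOn f (Ioi 0)) (hfA : ∀ z, 0 < z → f z ≤ A / z) (hA : 1 ≤ A) :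
    ∫⁻ η in Ioo (0:ℝ) 1,
      ENNReal.ofReal ((∫ ξ in η..1, scaleDensity f ξ) * speedDensity f σ η) = ⊤ := by
  set C := (σ ^ 2)⁻¹ / (2 * A - 1)
  have hC : 0 < C := div_pos (by positivity) (by linarith)
  refine eq_top_iff.2 <| calc
    ⊤ = ENNReal.ofReal C * ∫⁻ η in Ioo (0:ℝ) 1, ENNReal.ofReal (η⁻¹ - 1) := by
      rw [lintegral_Ioo_ofReal_inv_sub_one_eq_top, ENNReal.mul_top (ENNReal.ofReal_pos.2 hC).ne']
    _ = ∫⁻ η in Ioo (0:ℝ) 1, ENNReal.ofReal (C * (η⁻¹ - 1)) := by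
      rw [← lintegral_const_mul' _ _ ENNReal.ofReal_ne_top]
      simp only [ENNReal.ofReal_mul hC.le]
    _ ≤ _ := setLIntegral_mono' measurableSet_Ioo fun η hη => ENNReal.ofReal_le_ofReal
      (le_integral_scaleDensity_mul_speedDensity hσ hf hfA hA hη.1 hη.2.le)

end ScaleSpeed

theorem feller_N_zero_infinite_general (q r v c σ : ℝ)
    (hr : 0 < r) (hσ : 0 < σ) (hqc : 0 < q - c)
    (S' m : ℝ → ℝ)
    (hS' : ∀ ξ : ℝ, 0 < ξ →
      S' ξ = Real.exp (-(2 * ∫ z in (1:ℝ)..ξ, (q - r * z ^ v - c + σ ^ 2) / (σ ^ 2 * z))))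
    (hm : ∀ η : ℝ, 0 < η →
      m η = (σ * η) ^ (-2 : ℝ) *
        Real.exp (2 * ∫ z in (1:ℝ)..η, (q - r * z ^ v - c + σ ^ 2) / (σ ^ 2 * z))) :
    ∫⁻ η in Ioo (0:ℝ) 1, ENNReal.ofReal ((∫ ξ in η..(1:ℝ), S' ξ) * m η) = ⊤ := by
  set f : ℝ → ℝ := fun z => (q - r * z ^ v - c + σ ^ 2) / (σ ^ 2 * z)
  have hf : ContinuousOn f (Ioi 0) := by
    have hpow : ContinuousOn (fun z : ℝ => z ^ v) (Ioi 0) :=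
      continuousOn_id.rpow_const fun z hz => Or.inl (ne_of_gt hz)
    exact ContinuousOn.div (by fun_prop) (by fun_prop) fun z hz =>
      mul_ne_zero (by positivity) (ne_of_gt hz)
  have hfA : ∀ z, 0 < z → f z ≤ (q - c + σ ^ 2) / σ ^ 2 / z := fun z hz => by
    rw [div_div]
    exact div_le_div_of_nonneg_right (by nlinarith [rpow_pos_of_pos hz v]) (by positivity)
  have hA : 1 ≤ (q - c + σ ^ 2) / σ ^ 2 := by
    rw [one_le_div (by positivity)]
    linarith
  refine (setLIntegral_congr_fun measurableSet_Ioo fun η hη => ?_).trans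
    (lintegral_Ioo_integral_scaleDensity_mul_speedDensity_eq_top hσ hf hfA hA)
  rw [hm η hη.1, intervalIntegral.integral_congr fun ξ hξ =>
    hS' ξ ((lt_min hη.1 one_pos).trans_le hξ.1)]
  rfl

theorem feller_N_zero_infinite (q r v c σ : ℝ)
    (hq : 0 < q) (hr : 0 < r) (hv : 0 < v) (hσ : 0 < σ) (hqc : 0 < q - c)
    (S' m : ℝ → ℝ)
    (hS' : ∀ ξ : ℝ, 0 < ξ →
      S' ξ = Real.exp (-(2 * ∫ z in (1:ℝ)..ξ, (q - r * z ^ v - c + σ ^ 2) / (σ ^ 2 * z))))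
    (hm : ∀ η : ℝ, 0 < η →
      m η = (σ * η) ^ (-2 : ℝ) *
        Real.exp (2 * ∫ z in (1:ℝ)..η, (q - r * z ^ v - c + σ ^ 2) / (σ ^ 2 * z))) :
    ∫⁻ η in Ioo (0:ℝ) 1, ENNReal.ofReal ((∫ ξ in η..(1:ℝ), S' ξ) * m η) = ⊤ :=
  feller_N_zero_infinite_general q r v c σ hr hσ hqc S' m hS' hm
end

section
/- For q, r, v, σ > 0 and q - c > 0, the Feller quantity Σ(∞) = ∫₁^∞ [∫₁^ξ m(η) dη] S'(ξ) dξ is infinite, where S' and m are the scale and speed densities of the diffusion with drift b(z) = (q - r z^v - c + σ²) z and diffusion a(z) = σ² z². In particular Σ(∞) ≥ (1/(2(q-c))) ∫₁^∞ (1 - ξ^(-2(q-c)/σ²)) dξ = ∞. -/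
open Real Set MeasureTheory

/-!
Write `F ξ = ∫₁^ξ g` with `g z = (q - r z^v - c + σ²) / (σ² z)`, so that `S' = exp (-2F)` and
`m η = (ση)⁻² exp (2F η)`. Dropping `-r z^v` gives `g z ≤ k / z` with `k = (q - c + σ²) / σ² > 1`,
hence `m η S' ξ ≥ σ⁻² ξ^(-2k) η^(2k-2)` for `1 ≤ η ≤ ξ`. Integrating in `η` bounds the integrand of
`Σ(∞)` below by a constant multiple of `ξ⁻¹` for `ξ ≥ 2`, and `ξ⁻¹` is not integrable at infinity.
-/

lemma lintegral_ofReal_Ioi_eq_top_of_mul_inv_le {f : ℝ → ℝ} {a b C : ℝ} (hab : a ≤ b)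
    (hb : 0 ≤ b) (hC : 0 < C) (hf : ∀ x ∈ Ioi b, C * x⁻¹ ≤ f x) :
    ∫⁻ x in Ioi a, ENNReal.ofReal (f x) = ⊤ := by
  have hinv : ∫⁻ x in Ioi b, ENNReal.ofReal (C * x⁻¹) = ⊤ := by
    by_contra h
    have hnonneg : 0 ≤ᵐ[volume.restrict (Ioi b)] fun x => C * x⁻¹ :=
      ae_restrict_of_forall_mem measurableSet_Ioi fun x hx =>
        mul_nonneg hC.le (inv_nonneg.2 (hb.trans (le_of_lt hx)))
    have hint := (lintegral_ofReal_ne_top_iff_integrable (by fun_prop) hnonneg).1 h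
    exact not_integrableOn_Ioi_inv ((integrable_const_mul_iff (isUnit_iff_ne_zero.2 hC.ne') _).1 hint)
  refine eq_top_mono ?_ hinv
  calc ∫⁻ x in Ioi b, ENNReal.ofReal (C * x⁻¹)
      ≤ ∫⁻ x in Ioi b, ENNReal.ofReal (f x) :=
        setLIntegral_mono' measurableSet_Ioi fun x hx => ENNReal.ofReal_le_ofReal (hf x hx)
    _ ≤ ∫⁻ x in Ioi a, ENNReal.ofReal (f x) := lintegral_mono_set (Ioi_subset_Ioi hab)

lemma integral_le_mul_log_of_le_div {g : ℝ → ℝ} {k a b : ℝ} (ha : 0 < a) (hab : a ≤ b)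
    (hg : IntervalIntegrable g volume a b) (hgk : ∀ z ∈ Icc a b, g z ≤ k / z) :
    ∫ z in a..b, g z ≤ k * log (b / a) := by
  have hinv : IntervalIntegrable (fun z => k / z) volume a b :=
    ContinuousOn.intervalIntegrable_of_Icc hab
      (continuousOn_const.div continuousOn_id fun z hz => (ha.trans_le hz.1).ne')
  calc ∫ z in a..b, g z ≤ ∫ z in a..b, k / z := intervalIntegral.integral_mono_on hab hg hinv hgk
    _ = k * log (b / a) := by
      simp only [div_eq_mul_inv k, intervalIntegral.integral_const_mul,
        integral_inv_of_pos ha (ha.trans_le hab)]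

lemma mul_rpow_le_mul_exp_sub {F : ℝ → ℝ} {σ k η ξ : ℝ} (hσ : 0 < σ) (hη : 0 < η) (hξ : 0 < ξ)
    (hF : F ξ - F η ≤ k * log (ξ / η)) :
    σ ^ (-2 : ℝ) * (ξ ^ (-(2 * k)) * η ^ (2 * k - 2)) ≤
      (σ * η) ^ (-2 : ℝ) * exp (2 * F η) * exp (-(2 * F ξ)) := by
  have hpow : ξ ^ (-(2 * k)) * η ^ (2 * k) = exp (-(2 * (k * log (ξ / η)))) := by
    rw [rpow_def_of_pos hξ, rpow_def_of_pos hη, ← exp_add, log_div hξ.ne' hη.ne']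
    ring_nf
  calc σ ^ (-2 : ℝ) * (ξ ^ (-(2 * k)) * η ^ (2 * k - 2))
      = (σ * η) ^ (-2 : ℝ) * (ξ ^ (-(2 * k)) * η ^ (2 * k)) := by
        rw [mul_rpow hσ.le hη.le, show 2 * k - 2 = -2 + 2 * k by ring, rpow_add hη]
        ring
    _ ≤ (σ * η) ^ (-2 : ℝ) * exp (-(2 * (F ξ - F η))) := by
        rw [hpow]
        gcongr
    _ = (σ * η) ^ (-2 : ℝ) * exp (2 * F η) * exp (-(2 * F ξ)) := by
        rw [mul_assoc, ← exp_add]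
        ring_nf

lemma div_mul_inv_le_rpow_mul_integral_rpow {a ξ : ℝ} (ha : 1 < a) (hξ : 2 ≤ ξ) :
    (1 - 2 ^ (1 - a)) / (a - 1) * ξ⁻¹ ≤ ξ ^ (-a) * ∫ η in (1 : ℝ)..ξ, η ^ (a - 2) := by
  have hξ0 : 0 < ξ := by linarith
  have hinv : ξ ^ (-a) * ξ ^ (a - 1) = ξ⁻¹ := by
    rw [← rpow_add hξ0, show -a + (a - 1) = -1 by ring, rpow_neg_one]
  have hsplit : ξ ^ (-a) = ξ ^ (1 - a) * ξ⁻¹ := by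
    rw [← rpow_neg_one, ← rpow_add hξ0]
    ring_nf
  have hle : ξ ^ (1 - a) * ξ⁻¹ ≤ 2 ^ (1 - a) * ξ⁻¹ :=
    mul_le_mul_of_nonneg_right (rpow_le_rpow_of_nonpos two_pos hξ (by linarith))
      (inv_nonneg.2 hξ0.le)
  rw [integral_rpow (Or.inl (by linarith)), show a - 2 + 1 = a - 1 by ring, one_rpow,
    mul_div_assoc', mul_sub, hinv, mul_one, hsplit, div_mul_eq_mul_div,
    div_le_div_iff_of_pos_right (by linarith)]
  linarith

theorem lintegral_speed_mul_scale_eq_top {g S' m : ℝ → ℝ} {σ k : ℝ} (hσ : 0 < σ) (hk : 1 < k)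
    (hg : ContinuousOn g (Ici 1)) (hgk : ∀ z ∈ Ici (1 : ℝ), g z ≤ k / z)
    (hS' : ∀ ξ ∈ Ici (1 : ℝ), S' ξ = exp (-(2 * ∫ z in (1 : ℝ)..ξ, g z)))
    (hm : ∀ η ∈ Ici (1 : ℝ), m η = (σ * η) ^ (-2 : ℝ) * exp (2 * ∫ z in (1 : ℝ)..η, g z)) :
    ∫⁻ ξ in Ioi (1 : ℝ), ENNReal.ofReal ((∫ η in (1 : ℝ)..ξ, m η) * S' ξ) = ⊤ := by
  have hgint : ∀ a ∈ Ici (1 : ℝ), ∀ b ∈ Ici (1 : ℝ), IntervalIntegrable g volume a b :=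
    fun a ha b hb => (hg.mono (ordConnected_Ici.uIcc_subset ha hb)).intervalIntegrable
  have hpoint : ∀ ξ ∈ Ici (1 : ℝ), ∀ η ∈ Icc 1 ξ,
      σ ^ (-2 : ℝ) * (ξ ^ (-(2 * k)) * η ^ (2 * k - 2)) ≤ m η * S' ξ := by
    intro ξ hξ η hη
    have hη1 : η ∈ Ici (1 : ℝ) := hη.1
    rw [hm η hη1, hS' ξ hξ]
    refine mul_rpow_le_mul_exp_sub (F := fun x => ∫ z in (1 : ℝ)..x, g z) hσ
      (one_pos.trans_le hη.1) (one_pos.trans_le hξ) ?_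
    rw [intervalIntegral.integral_interval_sub_left (hgint 1 self_mem_Ici ξ hξ)
      (hgint 1 self_mem_Ici η hη1)]
    exact integral_le_mul_log_of_le_div (one_pos.trans_le hη.1) hη.2 (hgint η hη1 ξ hξ)
      fun z hz => hgk z (hη.1.trans hz.1)
  have hmint : ∀ ξ ∈ Ici (1 : ℝ), IntervalIntegrable m volume 1 ξ := by
    intro ξ hξ
    have hF : ContinuousOn (fun x => ∫ z in (1 : ℝ)..x, g z) (Icc 1 ξ) := by
      simpa only [uIcc_of_le (show (1 : ℝ) ≤ ξ from hξ)] using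
        intervalIntegral.continuousOn_primitive_interval' (hgint 1 self_mem_Ici ξ hξ) left_mem_uIcc
    refine ContinuousOn.intervalIntegrable_of_Icc hξ (ContinuousOn.congr ?_ fun η hη => hm η hη.1)
    exact ((continuousOn_const.mul continuousOn_id).rpow_const fun η hη =>
      Or.inl (mul_pos hσ (one_pos.trans_le hη.1)).ne').mul (continuousOn_const.mul hF).rexp
  have hC : 0 < σ ^ (-2 : ℝ) * ((1 - 2 ^ (1 - 2 * k)) / (2 * k - 1)) :=
    mul_pos (rpow_pos_of_pos hσ _) (div_pos
      (sub_pos.2 (rpow_lt_one_of_one_lt_of_neg one_lt_two (by linarith))) (by linarith))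
  refine lintegral_ofReal_Ioi_eq_top_of_mul_inv_le one_le_two zero_le_two hC fun ξ hξ => ?_
  have hξ1 : ξ ∈ Ici (1 : ℝ) := mem_Ici.2 (one_le_two.trans (le_of_lt hξ))
  calc σ ^ (-2 : ℝ) * ((1 - 2 ^ (1 - 2 * k)) / (2 * k - 1)) * ξ⁻¹
      ≤ σ ^ (-2 : ℝ) * (ξ ^ (-(2 * k)) * ∫ η in (1 : ℝ)..ξ, η ^ (2 * k - 2)) := by
        rw [mul_assoc]
        exact mul_le_mul_of_nonneg_left
          (div_mul_inv_le_rpow_mul_integral_rpow (by linarith) (le_of_lt hξ)) (rpow_nonneg hσ.le _)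
    _ = ∫ η in (1 : ℝ)..ξ, σ ^ (-2 : ℝ) * (ξ ^ (-(2 * k)) * η ^ (2 * k - 2)) := by
        simp only [intervalIntegral.integral_const_mul]
    _ ≤ ∫ η in (1 : ℝ)..ξ, m η * S' ξ :=
        intervalIntegral.integral_mono_on hξ1
          (((intervalIntegral.intervalIntegrable_rpow' (by linarith)).const_mul _).const_mul _)
          ((hmint ξ hξ1).mul_const _) (hpoint ξ hξ1)
    _ = (∫ η in (1 : ℝ)..ξ, m η) * S' ξ := intervalIntegral.integral_mul_const _ _

theorem feller_sigma_infinity_infinite_general (q r v c σ : ℝ)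
    (hr : 0 < r) (hσ : 0 < σ) (hqc : 0 < q - c)
    (S' m : ℝ → ℝ)
    (hS' : ∀ ξ : ℝ, 0 < ξ →
      S' ξ = Real.exp (-(2 * ∫ z in (1:ℝ)..ξ, (q - r * z ^ v - c + σ ^ 2) / (σ ^ 2 * z))))
    (hm : ∀ η : ℝ, 0 < η →
      m η = (σ * η) ^ (-2 : ℝ) *
        Real.exp (2 * ∫ z in (1:ℝ)..η, (q - r * z ^ v - c + σ ^ 2) / (σ ^ 2 * z))) :
    ∫⁻ ξ in Ioi (1:ℝ), ENNReal.ofReal ((∫ η in (1:ℝ)..ξ, m η) * S' ξ) = ⊤ := by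
  have hσ2 : 0 < σ ^ 2 := by positivity
  have hk : 1 < (q - c + σ ^ 2) / σ ^ 2 := by rw [lt_div_iff₀ hσ2]; linarith
  refine lintegral_speed_mul_scale_eq_top hσ hk ?_ ?_ (fun ξ hξ => hS' ξ (one_pos.trans_le hξ))
    (fun η hη => hm η (one_pos.trans_le hη))
  · have hpow : ContinuousOn (fun z : ℝ => z ^ v) (Ici 1) :=
      continuousOn_id.rpow_const fun z hz => Or.inl (one_pos.trans_le hz).ne'
    exact ContinuousOn.div (by fun_prop) (by fun_prop) fun z hz =>
      (mul_pos hσ2 (one_pos.trans_le hz)).ne'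
  · intro z hz
    have hz0 : 0 < z := one_pos.trans_le hz
    rw [div_div]
    refine div_le_div_of_nonneg_right ?_ (by positivity)
    linarith [mul_nonneg hr.le (rpow_nonneg hz0.le v)]

theorem feller_sigma_infinity_infinite (q r v c σ : ℝ)
    (hq : 0 < q) (hr : 0 < r) (hv : 0 < v) (hσ : 0 < σ) (hqc : 0 < q - c)
    (S' m : ℝ → ℝ)
    (hS' : ∀ ξ : ℝ, 0 < ξ →
      S' ξ = Real.exp (-(2 * ∫ z in (1:ℝ)..ξ, (q - r * z ^ v - c + σ ^ 2) / (σ ^ 2 * z))))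
    (hm : ∀ η : ℝ, 0 < η →
      m η = (σ * η) ^ (-2 : ℝ) *
        Real.exp (2 * ∫ z in (1:ℝ)..η, (q - r * z ^ v - c + σ ^ 2) / (σ ^ 2 * z))) :
    ∫⁻ ξ in Ioi (1:ℝ), ENNReal.ofReal ((∫ η in (1:ℝ)..ξ, m η) * S' ξ) = ⊤ :=
  feller_sigma_infinity_infinite_general q r v c σ hr hσ hqc S' m hS' hm
end
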